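/- For every real number z > 0, one has 2z(z − sin z)/(z² + 2·cos z − 2) < 4, and the expression tends to 4 as z → 0⁺. -/

import Mathlib

/-! With `D z = z ^ 2 + 2 cos z - 2 > 0`, the bound `< 4` is `4 - 4 cos z < z ^ 2 + z sin z`.
The two sides agree at `0` to sixth order, so Taylor polynomials do not separate them; instead
the difference is differentiated twice, down to
`2 - 2 cos z - z sin z = 4 sin (z/2) (sin (z/2) - (z/2) cos (z/2))`, which is positive on
`(0, 2π)`; beyond that range the inequality is crude. For the limit, the Taylor bounds
`sin z < z - z ^ 3 / 6 + z ^ 5 / 120` and `D z < z ^ 4 / 12` give the lower bound `4 - z ^ 2 / 5`. -/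

open Filter Set Real

lemma lt_of_hasDerivAt_of_deriv_pos {f f' : ℝ → ℝ} {a b : ℝ} (hab : a < b)
    (hf : ∀ x, HasDerivAt f (f' x) x) (hf' : ∀ x ∈ Ioo a b, 0 < f' x) : f a < f b := by
  obtain ⟨c, hc, hslope⟩ := exists_hasDerivAt_eq_slope f f' hab
    (continuous_iff_continuousAt.2 fun x => (hf x).continuousAt).continuousOn fun x _ => hf x
  have := hf' c hc
  rw [eq_div_iff (sub_pos.2 hab).ne'] at hslope
  nlinarith

lemma cos_lt_one_sub_sq_div_two_add_pow_four_div {x : ℝ} (hx : 0 < x) :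
    cos x < 1 - x ^ 2 / 2 + x ^ 4 / 24 := by
  have hderiv (y : ℝ) : HasDerivAt (fun x => 1 - x ^ 2 / 2 + x ^ 4 / 24 - cos x)
      (sin y - (y - y ^ 3 / 6)) y := by
    refine ((((hasDerivAt_pow 2 y).div_const 2).const_sub 1).add
      ((hasDerivAt_pow 4 y).div_const 24)).sub (hasDerivAt_cos y) |>.congr_deriv ?_
    push_cast
    ring
  have key := lt_of_hasDerivAt_of_deriv_pos hx hderiv
    fun y hy => sub_pos.2 (sin_gt_sub_cube hy.1)
  norm_num at key
  linarith

lemma sub_cube_add_pow_five_div_lt_sin {x : ℝ} (hx : 0 < x) :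
    sin x < x - x ^ 3 / 6 + x ^ 5 / 120 := by
  have hderiv (y : ℝ) : HasDerivAt (fun x => x - x ^ 3 / 6 + x ^ 5 / 120 - sin x)
      (1 - y ^ 2 / 2 + y ^ 4 / 24 - cos y) y := by
    refine (((hasDerivAt_id' y).sub ((hasDerivAt_pow 3 y).div_const 6)).add
      ((hasDerivAt_pow 5 y).div_const 120)).sub (hasDerivAt_sin y) |>.congr_deriv ?_
    push_cast
    ring
  have key := lt_of_hasDerivAt_of_deriv_pos hx hderiv
    fun y hy => sub_pos.2 (cos_lt_one_sub_sq_div_two_add_pow_four_div hy.1)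
  norm_num at key
  linarith

lemma mul_cos_lt_sin {x : ℝ} (hx₀ : 0 < x) (hxπ : x < π) : x * cos x < sin x := by
  have hderiv (y : ℝ) : HasDerivAt (fun x => sin x - x * cos x) (y * sin y) y := by
    refine (hasDerivAt_sin y).sub ((hasDerivAt_id' y).mul (hasDerivAt_cos y)) |>.congr_deriv ?_
    ring
  have key := lt_of_hasDerivAt_of_deriv_pos hx₀ hderiv
    fun y hy => mul_pos hy.1 (sin_pos_of_pos_of_lt_pi hy.1 (hy.2.trans hxπ))
  norm_num at key
  linarith

lemma mul_sin_lt_two_sub_two_cos {x : ℝ} (hx₀ : 0 < x) (hx : x < 2 * π) :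
    x * sin x < 2 - 2 * cos x := by
  obtain ⟨t, rfl⟩ : ∃ t, x = 2 * t := ⟨x / 2, by ring⟩
  have ht₀ : 0 < t := by linarith
  have htπ : t < π := by linarith
  -- `2 - 2 cos 2t - 2t sin 2t = 4 sin t (sin t - t cos t)`
  have hprod := mul_pos (sin_pos_of_pos_of_lt_pi ht₀ htπ) (sub_pos.2 (mul_cos_lt_sin ht₀ htπ))
  rw [sin_two_mul, cos_two_mul]
  nlinarith [sin_sq_add_cos_sq t]

lemma three_mul_sin_lt_two_mul_add_mul_cos {x : ℝ} (hx₀ : 0 < x) (hx : x < 2 * π) :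
    3 * sin x < 2 * x + x * cos x := by
  have hderiv (y : ℝ) : HasDerivAt (fun x => 2 * x + x * cos x - 3 * sin x)
      (2 - 2 * cos y - y * sin y) y := by
    refine (((hasDerivAt_id' y).const_mul 2).add ((hasDerivAt_id' y).mul (hasDerivAt_cos y))).sub
      ((hasDerivAt_sin y).const_mul 3) |>.congr_deriv ?_
    ring
  have key := lt_of_hasDerivAt_of_deriv_pos hx₀ hderiv
    fun y hy => sub_pos.2 (mul_sin_lt_two_sub_two_cos hy.1 (hy.2.trans hx))
  norm_num at key
  linarith

lemma four_sub_four_mul_cos_lt_sq_add_mul_sin {x : ℝ} (hx₀ : 0 < x) :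
    4 - 4 * cos x < x ^ 2 + x * sin x := by
  rcases le_or_gt x 6 with hx | hx
  · have hderiv (y : ℝ) : HasDerivAt (fun x => x ^ 2 + x * sin x + 4 * cos x - 4)
        (2 * y + y * cos y - 3 * sin y) y := by
      refine (((hasDerivAt_pow 2 y).add ((hasDerivAt_id' y).mul (hasDerivAt_sin y))).add
        ((hasDerivAt_cos y).const_mul 4)).sub_const 4 |>.congr_deriv ?_
      push_cast
      ring
    have key := lt_of_hasDerivAt_of_deriv_pos hx₀ hderiv fun y hy =>
      sub_pos.2 (three_mul_sin_lt_two_mul_add_mul_cos hy.1 (by linarith [hy.2, pi_gt_three]))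
    norm_num at key
    linarith
  · nlinarith [mul_le_mul_of_nonneg_left (neg_one_le_sin x) hx₀.le, neg_one_le_cos x,
      mul_lt_mul_of_pos_left hx hx₀]

lemma sq_add_two_mul_cos_sub_two_pos {z : ℝ} (hz : 0 < z) : 0 < z ^ 2 + 2 * cos z - 2 := by
  linarith [one_sub_sq_div_two_lt_cos hz.ne']

lemma div_lt_four {z : ℝ} (hz : 0 < z) :
    2 * z * (z - sin z) / (z ^ 2 + 2 * cos z - 2) < 4 := by
  have hD := sq_add_two_mul_cos_sub_two_pos hz
  rw [div_lt_iff₀ hD]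
  linarith [four_sub_four_mul_cos_lt_sq_add_mul_sin hz]

lemma four_sub_sq_div_five_le_div {z : ℝ} (hz : 0 < z) :
    4 - z ^ 2 / 5 ≤ 2 * z * (z - sin z) / (z ^ 2 + 2 * cos z - 2) := by
  have hD := sq_add_two_mul_cos_sub_two_pos hz
  have hN : 0 < 2 * z * (z - sin z) := mul_pos (by positivity) (sub_pos.2 (sin_lt hz))
  have hcos := cos_lt_one_sub_sq_div_two_add_pow_four_div hz
  have hsin := sub_cube_add_pow_five_div_lt_sin hz
  rw [le_div_iff₀ hD]
  rcases le_or_gt (4 - z ^ 2 / 5) 0 with hc | hc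
  · nlinarith
  · nlinarith [mul_lt_mul_of_pos_left hcos hc, mul_lt_mul_of_pos_left hsin hz]

theorem stmt3 :
    (∀ z : ℝ, 0 < z →
      2 * z * (z - Real.sin z) / (z ^ 2 + 2 * Real.cos z - 2) < 4) ∧
    Tendsto (fun z : ℝ => 2 * z * (z - Real.sin z) / (z ^ 2 + 2 * Real.cos z - 2))
      (nhdsWithin 0 (Ioi 0)) (nhds 4) := by
  refine ⟨fun z hz => div_lt_four hz, ?_⟩
  have hlower : Tendsto (fun z : ℝ => 4 - z ^ 2 / 5) (nhdsWithin 0 (Ioi 0)) (nhds 4) := by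
    have hcont : Continuous fun z : ℝ => 4 - z ^ 2 / 5 := by fun_prop
    simpa using (hcont.tendsto 0).mono_left nhdsWithin_le_nhds
  exact tendsto_of_tendsto_of_tendsto_of_le_of_le' hlower tendsto_const_nhds
    (eventually_nhdsWithin_of_forall fun z hz => four_sub_sq_div_five_le_div hz)
    (eventually_nhdsWithin_of_forall fun z hz => (div_lt_four hz).le)
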